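/- arXiv:1301.4624 — 2 statements merged into one kernel-verified Lean document; each statement's English description precedes it below -/
import Mathlib

section
/- Fix a non-compact well-ordered space J. Every J-convergence space is compactly generated. Consequently, for every topological space X, the identity function JX → kX is continuous. -/
open Set Topology TopologicalSpace

universe u v w

/-- The order topology on `WithTop α`; for a noncompact well-ordered `α` with the order
topology, `WithTop α` with this topology is the one-point (Alexandroff) compactification
`α ∪ {∞_α}`, in which `⊤ = ∞_α` is the maximum. -/
noncomputable instance withTopOrderTopology {α : Type*} [Preorder α] :
    TopologicalSpace (WithTop α) := Preorder.topology _

/-- `I` is almost closed in the ordered topological space `S`: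
`closure I \ I = {ℓ}` where `ℓ = min {s ∈ S | I < s}`. -/
def AlmostClosedIn {S : Type*} [LinearOrder S] [TopologicalSpace S] (I : Set S) : Prop :=
  ∃ ℓ : S, closure I \ I = {ℓ} ∧ IsLeast {s : S | ∀ i ∈ I, i < s} ℓ

/-- `I ⊆ J` is almost closed in `J ∪ {∞_J}` (modeled as `WithTop J` with the order topology). -/
def AlmostClosed {J : Type*} [LinearOrder J] (I : Set J) : Prop :=
  AlmostClosedIn ((fun j : J => (j : WithTop J)) '' I)

/-- A subset `C ⊆ X` is `J`-closed: for every almost closed `I ⊆ J` and continuous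
`f : I ∪ {∞_I} → X` (where `I ∪ {∞_I} = WithTop ↥I` is the one-point compactification of
`I` with its internal order topology) with `f(I) ⊆ C` one has `f(∞_I) ∈ C`. -/
def JClosedSet (J : Type v) [LinearOrder J] (X : Type u) [TopologicalSpace X] (C : Set X) : Prop :=
  ∀ I : Set J, AlmostClosed I → ∀ f : WithTop ↥I → X, Continuous f →
    (∀ i : ↥I, f (WithTop.some i) ∈ C) → f ⊤ ∈ C

/-- `U ⊆ X` is `J`-open iff its complement is `J`-closed. -/
def JOpenSet (J : Type v) [LinearOrder J] (X : Type u) [TopologicalSpace X] (U : Set X) : Prop :=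
  JClosedSet J X Uᶜ

/-- `X` is a `J`-convergence space. -/
def IsJConvergence (J : Type v) [LinearOrder J] (X : Type u) [TopologicalSpace X] : Prop :=
  ∀ A : Set X, ¬ IsClosed A →
    ∃ I : Set J, AlmostClosed I ∧ ∃ f : WithTop ↥I → X, Continuous f ∧
      (∀ i : ↥I, f (WithTop.some i) ∈ A) ∧ f ⊤ ∉ A

/-- `JX`: the topology of `J`-open sets. -/
noncomputable def jTop (J : Type v) [LinearOrder J] (X : Type u) [tX : TopologicalSpace X] :
    TopologicalSpace X := generateFrom {U : Set X | JOpenSet J X U}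

/-- `K` is a compact Hausdorff witness for the failure of `A` to be closed. -/
def CGWitness (K : Type v) [tK : TopologicalSpace K] (X : Type u) [TopologicalSpace X]
    (A : Set X) : Prop :=
  CompactSpace K ∧ T2Space K ∧ ∃ f : K → X, Continuous f ∧ ¬ IsClosed (f ⁻¹' A)

/-- `X` is compactly generated. -/
def CompactlyGen.{v', u'} (X : Type u') [TopologicalSpace X] : Prop :=
  ∀ A : Set X, ¬ IsClosed A → ∃ (K : Type v') (tK : TopologicalSpace K), @CGWitness K tK X _ A

/-- `kX`: `U` is open iff `f ⁻¹ U` is open for every continuous map from a compact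
Hausdorff space. -/
def kTop.{v', u'} (X : Type u') [tX : TopologicalSpace X] : TopologicalSpace X :=
  generateFrom {U : Set X |
    ∀ (K : Type v') (tK : TopologicalSpace K), @CompactSpace K tK → @T2Space K tK →
      ∀ f : K → X, Continuous[tK, tX] f → IsOpen[tK] (f ⁻¹' U)}

/-- The directed topology on the successor `J' ∪ {∞} = WithTop J'`: generated by singletons
`{j}` and final segments `(j, ∞]` for `j ∈ J'`. -/
def directedTopology (J' : Type*) [Preorder J'] : TopologicalSpace (WithTop J') :=
  generateFrom {s : Set (WithTop J') |
    (∃ j : J', s = {WithTop.some j}) ∨ ∃ j : J', s = Ioi (WithTop.some j)}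

/-- `J'` witnesses transfinite convergence into `A`. -/
def TransfiniteWitness (J' : Type v) [LinearOrder J'] (X : Type u) [TopologicalSpace X]
    (A : Set X) : Prop :=
  WellFoundedLT J' ∧ Nonempty J' ∧ NoMaxOrder J' ∧
    ∃ f : WithTop J' → X, Continuous[directedTopology J', _] f ∧
      (∀ j : J', f (WithTop.some j) ∈ A) ∧ f ⊤ ∉ A

/-- `X` is a transfinite sequential space. -/
def TransfiniteSequential.{v', u'} (X : Type u') [TopologicalSpace X] : Prop :=
  ∀ A : Set X, ¬ IsClosed A →
    ∃ (J' : Type v') (lo : LinearOrder J'), @TransfiniteWitness J' lo X _ A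

/-- `X` is a `J`-unique convergence space. -/
def JUnique (J : Type v) [LinearOrder J] (X : Type u) [TopologicalSpace X] : Prop :=
  ∀ I : Set J, AlmostClosed I → ∀ f g : WithTop ↥I → X, Continuous f → Continuous g →
    (∀ i : ↥I, f (WithTop.some i) = g (WithTop.some i)) → f = g

/-- The set `M(X,Y)` of continuous maps between spaces with explicitly given topologies. -/
def Cts (X : Type u) (Y : Type w) (tX : TopologicalSpace X) (tY : TopologicalSpace Y) :=
  {f : X → Y // Continuous[tX, tY] f}

/-- The `𝒥`-open topology on `M(X,Y)`, generated by the sets `W(t,U)`. -/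
noncomputable def mjTop (J : Type v) [LinearOrder J] {X : Type u} {Y : Type w}
    (tX : TopologicalSpace X) (tY : TopologicalSpace Y) :
    TopologicalSpace (Cts X Y tX tY) :=
  generateFrom {W : Set (Cts X Y tX tY) |
    ∃ I : Set J, AlmostClosed I ∧ ∃ t : WithTop ↥I → X, Continuous[_, tX] t ∧
      ∃ U : Set Y, IsOpen[tY] U ∧ W = {f | ∀ z : WithTop ↥I, f.1 (t z) ∈ U}}

/-!
An almost closed `I ⊆ J` is nonempty without a largest element, so in the compact Hausdorff
space `I ∪ {∞_I}` the point `∞_I` lies in the closure of `I` without lying in `I`. A map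
`f : I ∪ {∞_I} → X` witnessing that `A` is not `J`-closed is therefore already a compact
Hausdorff witness that `A` is not closed; dually, `f ⁻¹' U` is an open neighbourhood of `∞_I`
for every `k`-open `U ∋ f ∞_I`, so it meets `I`, which makes every `k`-open set `J`-open.
-/

instance WithTop.instOrderTopology {α : Type*} [Preorder α] : OrderTopology (WithTop α) :=
  ⟨rfl⟩

section AlmostClosedIn

variable {S : Type*} [LinearOrder S] [TopologicalSpace S] {I : Set S}

theorem AlmostClosedIn.exists_mem_closure_forall_lt (hI : AlmostClosedIn I) :
    ∃ ℓ ∈ closure I, ∀ i ∈ I, i < ℓ := by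
  obtain ⟨ℓ, hcl, hleast⟩ := hI
  exact ⟨ℓ, (hcl.symm ▸ mem_singleton ℓ : ℓ ∈ closure I \ I).1, hleast.1⟩

theorem AlmostClosedIn.nonempty (hI : AlmostClosedIn I) : I.Nonempty := by
  obtain ⟨ℓ, hℓ, -⟩ := hI.exists_mem_closure_forall_lt
  exact closure_nonempty_iff.1 ⟨ℓ, hℓ⟩

theorem AlmostClosedIn.exists_gt [OrderTopology S] (hI : AlmostClosedIn I) {a : S}
    (ha : a ∈ I) : ∃ b ∈ I, a < b := by
  obtain ⟨ℓ, hℓ, hlt⟩ := hI.exists_mem_closure_forall_lt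
  obtain ⟨b, hab, hb⟩ := mem_closure_iff.1 hℓ (Ioi a) isOpen_Ioi (hlt a ha)
  exact ⟨b, hb, hab⟩

end AlmostClosedIn

namespace WithTop

variable {α : Type*} [LinearOrder α]

theorem top_mem_closure_range_coe [Nonempty α] [NoMaxOrder α] :
    (⊤ : WithTop α) ∈ closure (range ((↑) : α → WithTop α)) := by
  have hlub : IsLUB (range ((↑) : α → WithTop α)) ⊤ := by
    refine ⟨fun _ _ => le_top, fun b hb => ?_⟩
    induction b with
    | top => exact le_rfl
    | coe c =>
      obtain ⟨d, hcd⟩ := exists_gt c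
      exact absurd (coe_le_coe.1 (hb (mem_range_self d))) hcd.not_ge
  exact hlub.mem_closure (range_nonempty _)

theorem not_isClosed_range_coe [Nonempty α] [NoMaxOrder α] :
    ¬ IsClosed (range ((↑) : α → WithTop α)) := fun h =>
  (h.closure_eq ▸ top_mem_closure_range_coe : (⊤ : WithTop α) ∈ range _).elim
    fun _ h => coe_ne_top h

theorem compactSpace_of_wellFoundedLT [WellFoundedLT α] [Nonempty α] :
    CompactSpace (WithTop α) :=
  letI := WellFoundedLT.toOrderBot α
  letI := WellFoundedLT.conditionallyCompleteLinearOrderBot α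
  inferInstance

end WithTop

namespace AlmostClosed

variable {J : Type v} [LinearOrder J] {I : Set J}

theorem nonempty (hI : AlmostClosed I) : Nonempty I :=
  (AlmostClosedIn.nonempty hI).of_image.to_subtype

theorem noMaxOrder (hI : AlmostClosed I) : NoMaxOrder I where
  exists_gt a := by
    obtain ⟨_, ⟨b, hb, rfl⟩, hab⟩ := AlmostClosedIn.exists_gt hI (mem_image_of_mem _ a.2)
    exact ⟨⟨b, hb⟩, Subtype.mk_lt_mk.2 (WithTop.coe_lt_coe.1 hab)⟩

theorem top_mem_closure_range_coe (hI : AlmostClosed I) :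
    (⊤ : WithTop I) ∈ closure (range ((↑) : I → WithTop I)) :=
  have := hI.nonempty
  have := hI.noMaxOrder
  WithTop.top_mem_closure_range_coe

theorem not_isClosed_range_coe (hI : AlmostClosed I) :
    ¬ IsClosed (range ((↑) : I → WithTop I)) :=
  have := hI.nonempty
  have := hI.noMaxOrder
  WithTop.not_isClosed_range_coe

theorem compactSpace [WellFoundedLT J] (hI : AlmostClosed I) : CompactSpace (WithTop I) :=
  have := hI.nonempty
  WithTop.compactSpace_of_wellFoundedLT

end AlmostClosed

section

variable {J : Type v} [LinearOrder J] [WellFoundedLT J]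

theorem IsJConvergence.compactlyGen {X : Type u} [TopologicalSpace X]
    (hX : IsJConvergence J X) : CompactlyGen.{v} X := by
  intro A hA
  obtain ⟨I, hI, f, hf, hfA, hfT⟩ := hX A hA
  have hpre : f ⁻¹' A = range ((↑) : I → WithTop I) := by
    ext x
    induction x with
    | top => simpa using hfT
    | coe i => simpa using hfA i
  exact ⟨WithTop I, inferInstance, hI.compactSpace, inferInstance, f, hf,
    hpre ▸ hI.not_isClosed_range_coe⟩

theorem continuous_id_jTop_kTop (X : Type u) (tX : TopologicalSpace X) :
    Continuous[jTop J X, kTop.{v} X] id := by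
  refine continuous_generateFrom_iff.2 fun U hU => isOpen_generateFrom_of_mem ?_
  intro I hI f hf hfU hfT
  have := hI.compactSpace
  obtain ⟨_, hxU, i, rfl⟩ :=
    mem_closure_iff.1 hI.top_mem_closure_range_coe _ (hU _ _ this inferInstance f hf) hfT
  exact hfU i hxU

end

theorem stmt12_general {J : Type v} [LinearOrder J] [WellFoundedLT J] :
    (∀ (X : Type u) [TopologicalSpace X], IsJConvergence J X → CompactlyGen.{v} X) ∧
      ∀ (X : Type u) (tX : TopologicalSpace X),
        Continuous[@jTop J _ X tX, @kTop.{v} X tX] id :=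
  ⟨fun _ _ hX => hX.compactlyGen, continuous_id_jTop_kTop⟩

theorem stmt12 {J : Type v} [LinearOrder J] [WellFoundedLT J] [TopologicalSpace J]
    [OrderTopology J] [NoncompactSpace J] :
    (∀ (X : Type u) [TopologicalSpace X], IsJConvergence J X → CompactlyGen.{v} X) ∧
      ∀ (X : Type u) (tX : TopologicalSpace X),
        Continuous[@jTop J _ X tX, @kTop.{v} X tX] id :=
  stmt12_general
end

section
/- Fix a non-compact well-ordered space J. Every J-unique convergence space is T₁. -/
/-!
If `x ⤳ y` in `X`, the map `J ∪ {∞_J} → X` sending `J` to `x` and `∞_J` to `y` is continuous and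
agrees on `J` with the constant map `x`, so `J`-uniqueness forces `x = y`. This applies because `J`
itself is almost closed in `J ∪ {∞_J}`: a noncompact well-order has no maximum, so `∞_J` is a
limit point of `J`.
-/

open Set Topology TopologicalSpace

universe u v w

instance {α : Type*} [Preorder α] : OrderTopology (WithTop α) := ⟨rfl⟩

theorem almostClosedIn_Iio {S : Type*} [LinearOrder S] [TopologicalSpace S] [OrderTopology S]
    {a : S} (ha : Order.IsSuccPrelimit a) (hne : (Iio a).Nonempty) : AlmostClosedIn (Iio a) := by
  refine ⟨a, ?_, ⟨fun _ => id, fun s hs => not_lt.1 fun hsa => lt_irrefl s (hs s hsa)⟩⟩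
  have hcl : closure (Iio a) ⊆ Iic a := isClosed_Iic.closure_subset_iff.2 Iio_subset_Iic_self
  ext s
  simp only [mem_sdiff, mem_Iio, not_lt, mem_singleton_iff]
  refine ⟨fun hs => le_antisymm (hcl hs.1) hs.2, ?_⟩
  rintro rfl
  exact ⟨ha.isLUB_Iio.mem_closure hne, le_rfl⟩

theorem almostClosed_univ {J : Type*} [LinearOrder J] [Nonempty J] [NoMaxOrder J] :
    AlmostClosed (univ : Set J) := by
  rw [AlmostClosed, image_univ, WithTop.range_coe]
  exact almostClosedIn_Iio WithTop.isSuccPrelimit_top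
    ⟨_, WithTop.coe_lt_top (Classical.arbitrary J)⟩

theorem NoncompactSpace.noMaxOrder {J : Type*} [LinearOrder J] [WellFoundedLT J]
    [TopologicalSpace J] [OrderTopology J] [NoncompactSpace J] : NoMaxOrder J := by
  refine ⟨fun m => ?_⟩
  by_contra! hm
  have : Nonempty J := ⟨m⟩
  let := WellFoundedLT.toOrderBot J
  let := WellFoundedLT.conditionallyCompleteLinearOrderBot J
  have huniv : (univ : Set J) = Icc ⊥ m := by ext; simp [hm]
  exact NoncompactSpace.noncompact_univ (huniv ▸ isCompact_Icc)

theorem continuous_update_const_of_specializes {K X : Type*} [TopologicalSpace K] [T1Space K]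
    [DecidableEq K] [TopologicalSpace X] (p : K) {x y : X} (h : x ⤳ y) :
    Continuous (Function.update (fun _ : K => x) p y) := by
  refine continuous_def.2 fun U hU => ?_
  by_cases hx : x ∈ U
  · by_cases hy : y ∈ U
    · convert isOpen_univ
      ext z; by_cases hz : z = p <;> simp [hz, hx, hy]
    · convert isOpen_compl_singleton (x := p)
      ext z; by_cases hz : z = p <;> simp [hz, hx, hy]
  · have hy : y ∉ U := fun hy => hx (specializes_iff_forall_open.1 h U hU hy)
    convert isOpen_empty
    ext z; by_cases hz : z = p <;> simp [hz, hx, hy]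

theorem stmt18 {J : Type v} [LinearOrder J] [WellFoundedLT J] [TopologicalSpace J]
    [OrderTopology J] [NoncompactSpace J] {X : Type u} [TopologicalSpace X]
    (h : JUnique J X) : T1Space X := by
  have : Nonempty J := (Filter.cocompact J).nonempty_of_neBot
  have := NoncompactSpace.noMaxOrder (J := J)
  refine t1Space_iff_specializes_imp_eq.2 fun x y hxy => ?_
  have hfg := h univ almostClosed_univ (fun _ => x) (Function.update (fun _ => x) ⊤ y)
    continuous_const (continuous_update_const_of_specializes ⊤ hxy)
    (fun _ => by simp)
  simpa using congrFun hfg ⊤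
end
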